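/- Let n ≥ 1, let p ≥ 0 and q ≥ 0 be integers, and let X₁,…,X_p, Y₁,…,Y_q and X'₁,…,X'_p, Y'₁,…,Y'_q be n×n complex matrices. Set r = p+1+q if p is odd and r = p+2+q if p is even. Define the rn×rn matrix M_{X,Y} as the block-diagonal direct sum of: (a) the (p+1)n×(p+1)n matrix whose (k,k+1) n×n block equals X_k for k = 1,…,p and all other blocks zero, and (b) Y₁ ⊕ Y₂ ⊕ ⋯ ⊕ Y_q if p is odd, or 0_n ⊕ Y₁ ⊕ ⋯ ⊕ Y_q if p is even; define M_{X',Y'} analogously from the primed matrices. Define the rn×rn matrix J whose (k,k+1) n×n block equals I_n for k = 1,…,r−1 and all other blocks are zero. Then the pairs (J, M_{X,Y}) and (J, M_{X',Y'}) are consimilar if and only if there exists a nonsingular n×n complex matrix C such that: (i) C⁻¹·X_j·C = X'_j for every even j; (ii) conj(C)⁻¹·X_j·conj(C) = X'_j for every odd j; (iii) conj(C)⁻¹·Y_j·C = Y'_j for every odd j; and (iv) C⁻¹·Y_j·conj(C) = Y'_j for every even j. -/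

import Mathlib

/-- Two pairs of square complex matrices are consimilar if there is a
nonsingular `S` with `conj(S)⁻¹ * Aᵢ * S = Bᵢ` for `i = 1, 2`. -/
def ConsimilarPair {m : Type*} [Fintype m] [DecidableEq m]
    (A₁ A₂ B₁ B₂ : Matrix m m ℂ) : Prop :=
  ∃ S : Matrix m m ℂ, IsUnit S ∧
    (S.map (starRingEnd ℂ))⁻¹ * A₁ * S = B₁ ∧
    (S.map (starRingEnd ℂ))⁻¹ * A₂ * S = B₂

/-- `r = p + 1 + q` if `p` is odd, `r = p + 2 + q` if `p` is even. -/
def rBlocks (p q : ℕ) : ℕ := p + q + 2 - p % 2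

/-- The `rn × rn` matrix `J` whose `(k, k+1)` blocks are `I_n` and whose other
blocks are zero. -/
def Jmat (n p q : ℕ) :
    Matrix (Fin (rBlocks p q) × Fin n) (Fin (rBlocks p q) × Fin n) ℂ :=
  fun i j => if (j.1 : ℕ) = (i.1 : ℕ) + 1 ∧ i.2 = j.2 then 1 else 0

/-- The `rn × rn` matrix `M_{X,Y}`: the direct sum of the `(p+1)n × (p+1)n`
block matrix with `X₁, …, X_p` on the block superdiagonal, and
`Y₁ ⊕ ⋯ ⊕ Y_q` (if `p` is odd) or `0_n ⊕ Y₁ ⊕ ⋯ ⊕ Y_q` (if `p` is even).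
Here `X` and `Y` are 0-indexed, so `X ⟨k⟩` is `X_{k+1}`. -/
def Mmat (n p q : ℕ) (X : Fin p → Matrix (Fin n) (Fin n) ℂ)
    (Y : Fin q → Matrix (Fin n) (Fin n) ℂ) :
    Matrix (Fin (rBlocks p q) × Fin n) (Fin (rBlocks p q) × Fin n) ℂ :=
  fun i j =>
    if h1 : (i.1 : ℕ) < p ∧ (j.1 : ℕ) = (i.1 : ℕ) + 1 then X ⟨(i.1 : ℕ), h1.1⟩ i.2 j.2
    else if h2 : i.1 = j.1 ∧ p + 2 - p % 2 ≤ (i.1 : ℕ) then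
      Y ⟨(i.1 : ℕ) - (p + 2 - p % 2), by
        have hi := i.1.isLt; simp only [rBlocks] at hi; omega⟩ i.2 j.2
    else 0

/-!
Writing the `rn × rn` matrices as `r × r` matrices over the ring `R = M_n(ℂ)` (via `Matrix.comp`),
consimilarity of pairs becomes `A S = σ(S) B` for a unit `S`, where `σ` is entrywise conjugation,
a ring endomorphism of `R`. The relation `J S = σ(S) J` forces `S (i+1) (j+1) = σ (S i j)` and
`S (i+1) 0 = 0`, so the diagonal blocks of `S` are `σ^k C` with `C = S 0 0`; `C` is a unit because
`S⁻¹` satisfies the same relation, so `(S S⁻¹) 0 0 = C (S⁻¹ 0 0)`. The rows of `M_{X,Y}` and the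
columns of `M_{X',Y'}` through the blocks `X_j`, `Y_j` have a single nonzero entry, so comparing the
entries `(j, j+1)` and `(k, k)` of `M_{X,Y} S = σ(S) M_{X',Y'}` gives exactly
`X_j σ^{j+1} C = σ^{j+1} C X'_j` and `Y_j σ^k C = σ^{k+1} C Y'_j`. Conversely the block diagonal
`S = diag(σ^k C)` satisfies both relations.
-/

open Matrix

section Blocks

variable {R : Type*} [Semiring R]

theorem Matrix.mul_apply_eq_of_row_eq_zero {l m o : Type*} [Fintype m] {A : Matrix l m R}
    {B : Matrix m o R} {i : l} {k : m} (j : o) (h : ∀ k', k' ≠ k → A i k' = 0) :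
    (A * B) i j = A i k * B k j :=
  (mul_apply).trans <| Fintype.sum_eq_single k fun k' hk' => by rw [h k' hk', zero_mul]

theorem Matrix.mul_apply_eq_of_col_eq_zero {l m o : Type*} [Fintype m] {A : Matrix l m R}
    {B : Matrix m o R} (i : l) {j : o} {k : m} (h : ∀ k', k' ≠ k → B k' j = 0) :
    (A * B) i j = A i k * B k j :=
  (mul_apply).trans <| Fintype.sum_eq_single k fun k' hk' => by rw [h k' hk', mul_zero]

variable (R) in
def Jblocks (r : ℕ) : Matrix (Fin r) (Fin r) R :=
  Matrix.of fun i j => if (j : ℕ) = i + 1 then 1 else 0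

def Mblocks {p q : ℕ} (X : Fin p → R) (Y : Fin q → R) :
    Matrix (Fin (rBlocks p q)) (Fin (rBlocks p q)) R :=
  Matrix.of fun i j =>
    if h1 : (i : ℕ) < p ∧ (j : ℕ) = (i : ℕ) + 1 then X ⟨(i : ℕ), h1.1⟩
    else if h2 : i = j ∧ p + 2 - p % 2 ≤ (i : ℕ) then
      Y ⟨(i : ℕ) - (p + 2 - p % 2), by have hi := i.isLt; simp only [rBlocks] at hi; omega⟩
    else 0

section Jblocks

variable {r : ℕ}

theorem Jblocks_mul_apply (A : Matrix (Fin r) (Fin r) R) {i k : Fin r} (hk : (k : ℕ) = i + 1)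
    (j : Fin r) : (Jblocks R r * A) i j = A k j := by
  refine (mul_apply_eq_of_row_eq_zero (k := k) j fun k' hk' => if_neg ?_).trans ?_
  · exact fun h => hk' (Fin.ext (h.trans hk.symm))
  · simp [Jblocks, hk]

theorem mul_Jblocks_apply (A : Matrix (Fin r) (Fin r) R) (i : Fin r) {j k : Fin r}
    (hj : (j : ℕ) = k + 1) : (A * Jblocks R r) i j = A i k := by
  refine (mul_apply_eq_of_col_eq_zero (k := k) i fun k' hk' => if_neg ?_).trans ?_
  · exact fun h => hk' (Fin.ext (by omega))
  · simp [hj]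

theorem mul_Jblocks_apply_of_val_eq_zero (A : Matrix (Fin r) (Fin r) R) (i : Fin r) {j : Fin r}
    (hj : (j : ℕ) = 0) : (A * Jblocks R r) i j = 0 :=
  (mul_apply).trans <| Finset.sum_eq_zero fun k _ => by simp [Jblocks, hj]

variable {σ : R →+* R} {S : Matrix (Fin r) (Fin r) R}

theorem apply_eq_of_Jblocks_mul_eq (hJ : Jblocks R r * S = S.map σ * Jblocks R r)
    {i j i' j' : Fin r} (hi : (i' : ℕ) = i + 1) (hj : (j' : ℕ) = j + 1) :
    S i' j' = σ (S i j) := by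
  simpa [Jblocks_mul_apply S hi, mul_Jblocks_apply _ _ hj] using congr_fun (congr_fun hJ i) j'

theorem apply_eq_zero_of_Jblocks_mul_eq (hJ : Jblocks R r * S = S.map σ * Jblocks R r)
    {k z : Fin r} (hz : (z : ℕ) = 0) (hk : k ≠ z) : S k z = 0 := by
  have hk0 : (k : ℕ) - 1 + 1 = k :=
    Nat.sub_add_cancel (Nat.pos_of_ne_zero (hz ▸ Fin.val_ne_of_ne hk))
  have := congr_fun (congr_fun hJ ⟨k - 1, by omega⟩) z
  rwa [Jblocks_mul_apply S hk0.symm, mul_Jblocks_apply_of_val_eq_zero _ _ hz] at this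

theorem apply_self_eq_iterate_of_Jblocks_mul_eq (hJ : Jblocks R r * S = S.map σ * Jblocks R r)
    {z : Fin r} (hz : (z : ℕ) = 0) (k : Fin r) : S k k = σ^[k] (S z z) := by
  obtain ⟨k, hk⟩ := k
  induction k with
  | zero => rw [Function.iterate_zero_apply, show (⟨0, hk⟩ : Fin r) = z from Fin.ext hz.symm]
  | succ k ih =>
    rw [apply_eq_of_Jblocks_mul_eq hJ (i := ⟨k, by omega⟩) (j := ⟨k, by omega⟩) rfl rfl,
      ih (by omega), Function.iterate_succ_apply']

theorem isUnit_apply_of_Jblocks_mul_eq (hS : IsUnit S)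
    (hJ : Jblocks R r * S = S.map σ * Jblocks R r) {z : Fin r} (hz : (z : ℕ) = 0) :
    IsUnit (S z z) := by
  obtain ⟨⟨S, T, hST, hTS⟩, rfl⟩ := hS
  have hTS' : T.map σ * S.map σ = 1 := by
    rw [← Matrix.map_mul, hTS, Matrix.map_one _ (map_zero σ) (map_one σ)]
  have hJT : Jblocks R r * T = T.map σ * Jblocks R r := by
    calc Jblocks R r * T = T.map σ * (S.map σ * Jblocks R r) * T := by
          rw [← mul_assoc, hTS', one_mul]
      _ = T.map σ * Jblocks R r := by rw [← hJ, ← mul_assoc, mul_assoc _ S, hST, mul_one]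
  have hcol {A B : Matrix (Fin r) (Fin r) R} (hB : Jblocks R r * B = B.map σ * Jblocks R r) :
      (A * B) z z = A z z * B z z :=
    mul_apply_eq_of_col_eq_zero z fun k hk => apply_eq_zero_of_Jblocks_mul_eq hB hz hk
  exact ⟨⟨S z z, T z z, by rw [← hcol hJT, hST, one_apply_eq],
    by rw [← hcol hJ, hTS, one_apply_eq]⟩, rfl⟩

theorem isUnit_diagonal_iterate (σ : R →+* R) {C : R} (hC : IsUnit C) :
    IsUnit (diagonal fun k : Fin r => σ^[k] C) :=
  (Pi.isUnit_iff.mpr fun k => by rw [← RingHom.coe_pow]; exact hC.map _).map (diagonalRingHom _ _)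

theorem Jblocks_mul_diagonal_iterate (σ : R →+* R) (C : R) :
    Jblocks R r * diagonal (fun k : Fin r => σ^[k] C) =
      (diagonal fun k : Fin r => σ^[k] C).map σ * Jblocks R r := by
  ext i j
  rw [mul_diagonal, diagonal_map (map_zero σ), diagonal_mul]
  simp only [Jblocks, of_apply]
  split_ifs with h
  · rw [h, Function.iterate_succ_apply', mul_one, one_mul]
  · rw [zero_mul, mul_zero]

end Jblocks

section Mblocks

variable {p q : ℕ} {X X' : Fin p → R} {Y Y' : Fin q → R}

theorem Mblocks_apply_eq_X {i k : Fin (rBlocks p q)} (j : Fin p) (hi : (i : ℕ) = j)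
    (hk : (k : ℕ) = j + 1) : Mblocks X Y i k = X j := by
  rw [Mblocks, of_apply, dif_pos ⟨hi ▸ j.isLt, by omega⟩]
  exact congr_arg X (Fin.ext hi)

theorem Mblocks_apply_self_eq_Y {k : Fin (rBlocks p q)} (j : Fin q)
    (hk : (k : ℕ) = j + (p + 2 - p % 2)) : Mblocks X Y k k = Y j := by
  rw [Mblocks, of_apply, dif_neg (by omega), dif_pos ⟨rfl, by omega⟩]
  exact congr_arg Y (Fin.ext (by simp only; omega))

theorem Mblocks_apply_eq_zero {i k : Fin (rBlocks p q)} (hX : ¬((i : ℕ) < p ∧ (k : ℕ) = i + 1))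
    (hY : ¬(i = k ∧ p + 2 - p % 2 ≤ (i : ℕ))) : Mblocks X Y i k = 0 := by
  rw [Mblocks, of_apply, dif_neg hX, dif_neg hY]

theorem exists_fin_rBlocks_val_eq_succ (j : Fin p) : ∃ i : Fin (rBlocks p q), (i : ℕ) = j + 1 :=
  ⟨⟨j + 1, by have := j.isLt; unfold rBlocks; omega⟩, rfl⟩

theorem exists_fin_rBlocks_val_eq_add (j : Fin q) :
    ∃ k : Fin (rBlocks p q), (k : ℕ) = j + (p + 2 - p % 2) :=
  ⟨⟨j + (p + 2 - p % 2), by have := j.isLt; unfold rBlocks; omega⟩, rfl⟩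

variable {σ : R →+* R} {S : Matrix (Fin (rBlocks p q)) (Fin (rBlocks p q)) R}

theorem X_mul_eq_of_Mblocks_mul_eq (hJ : Jblocks R _ * S = S.map σ * Jblocks R _)
    (hM : Mblocks X Y * S = S.map σ * Mblocks X' Y') {z : Fin (rBlocks p q)} (hz : (z : ℕ) = 0)
    (j : Fin p) : X j * σ^[j + 1] (S z z) = σ^[j + 1] (S z z) * X' j := by
  obtain ⟨k, hk⟩ := exists_fin_rBlocks_val_eq_succ (q := q) j
  obtain ⟨i, hi⟩ : ∃ i : Fin (rBlocks p q), (i : ℕ) = j := ⟨⟨j, by omega⟩, rfl⟩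
  have h := congr_fun (congr_fun hM i) k
  rwa [mul_apply_eq_of_row_eq_zero (k := k) k fun k' hk' => Mblocks_apply_eq_zero
      (fun h => hk' (Fin.ext (by omega))) (fun ⟨h, _⟩ => by subst h; omega),
    mul_apply_eq_of_col_eq_zero (k := i) i fun k' hk' => Mblocks_apply_eq_zero
      (fun h => hk' (Fin.ext (by omega))) (fun ⟨h, _⟩ => by subst h; omega),
    Mblocks_apply_eq_X j hi hk, Mblocks_apply_eq_X j hi hk, map_apply,
    apply_self_eq_iterate_of_Jblocks_mul_eq hJ hz k,
    apply_self_eq_iterate_of_Jblocks_mul_eq hJ hz i, hi, hk, ← Function.iterate_succ_apply' σ] at h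

theorem Y_mul_eq_of_Mblocks_mul_eq (hJ : Jblocks R _ * S = S.map σ * Jblocks R _)
    (hM : Mblocks X Y * S = S.map σ * Mblocks X' Y') {z : Fin (rBlocks p q)} (hz : (z : ℕ) = 0)
    (j : Fin q) :
    Y j * σ^[j + (p + 2 - p % 2)] (S z z) = σ^[j + (p + 2 - p % 2) + 1] (S z z) * Y' j := by
  obtain ⟨k, hk⟩ := exists_fin_rBlocks_val_eq_add (p := p) j
  have h := congr_fun (congr_fun hM k) k
  rwa [mul_apply_eq_of_row_eq_zero (k := k) k fun k' hk' => Mblocks_apply_eq_zero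
      (fun h => by omega) (fun ⟨h, _⟩ => hk' h.symm),
    mul_apply_eq_of_col_eq_zero (k := k) k fun k' hk' => Mblocks_apply_eq_zero
      (fun h => by omega) (fun ⟨h, _⟩ => hk' h),
    Mblocks_apply_self_eq_Y j hk, Mblocks_apply_self_eq_Y j hk, map_apply,
    apply_self_eq_iterate_of_Jblocks_mul_eq hJ hz k, hk, ← Function.iterate_succ_apply' σ] at h

theorem Mblocks_mul_diagonal_iterate {C : R}
    (hX : ∀ j : Fin p, X j * σ^[j + 1] C = σ^[j + 1] C * X' j)
    (hY : ∀ j : Fin q, Y j * σ^[j + (p + 2 - p % 2)] C = σ^[j + (p + 2 - p % 2) + 1] C * Y' j) :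
    Mblocks X Y * diagonal (fun k : Fin (rBlocks p q) => σ^[k] C) =
      (diagonal fun k : Fin (rBlocks p q) => σ^[k] C).map σ * Mblocks X' Y' := by
  ext i k
  rw [mul_diagonal, diagonal_map (map_zero σ), diagonal_mul, ← Function.iterate_succ_apply' σ]
  by_cases hXik : (i : ℕ) < p ∧ (k : ℕ) = i + 1
  · obtain ⟨hi, hk⟩ := hXik
    rw [Mblocks_apply_eq_X ⟨i, hi⟩ rfl hk, Mblocks_apply_eq_X ⟨i, hi⟩ rfl hk, hk]
    exact hX ⟨i, hi⟩
  by_cases hYik : i = k ∧ p + 2 - p % 2 ≤ (i : ℕ)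
  · obtain ⟨rfl, hi⟩ := hYik
    obtain ⟨j, hj⟩ : ∃ j : Fin q, (i : ℕ) = j + (p + 2 - p % 2) :=
      ⟨⟨i - (p + 2 - p % 2), by have := i.isLt; unfold rBlocks at this; omega⟩,
        by simp only; omega⟩
    rw [Mblocks_apply_self_eq_Y j hj, Mblocks_apply_self_eq_Y j hj, hj]
    exact hY j
  rw [Mblocks_apply_eq_zero hXik hYik, Mblocks_apply_eq_zero hXik hYik, zero_mul, mul_zero]

end Mblocks

theorem exists_isUnit_Jblocks_Mblocks_intertwiner_iff {p q : ℕ} (σ : R →+* R)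
    (X X' : Fin p → R) (Y Y' : Fin q → R) :
    (∃ S : Matrix (Fin (rBlocks p q)) (Fin (rBlocks p q)) R, IsUnit S ∧
        Jblocks R _ * S = S.map σ * Jblocks R _ ∧ Mblocks X Y * S = S.map σ * Mblocks X' Y') ↔
      ∃ C : R, IsUnit C ∧ (∀ j : Fin p, X j * σ^[j + 1] C = σ^[j + 1] C * X' j) ∧
        ∀ j : Fin q, Y j * σ^[j + (p + 2 - p % 2)] C = σ^[j + (p + 2 - p % 2) + 1] C * Y' j := by
  constructor
  · rintro ⟨S, hS, hJ, hM⟩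
    obtain ⟨z, hz⟩ : ∃ z : Fin (rBlocks p q), (z : ℕ) = 0 := ⟨⟨0, by unfold rBlocks; omega⟩, rfl⟩
    exact ⟨S z z, isUnit_apply_of_Jblocks_mul_eq hS hJ hz, X_mul_eq_of_Mblocks_mul_eq hJ hM hz,
      Y_mul_eq_of_Mblocks_mul_eq hJ hM hz⟩
  · rintro ⟨C, hC, hX, hY⟩
    exact ⟨_, isUnit_diagonal_iterate σ hC, Jblocks_mul_diagonal_iterate σ C,
      Mblocks_mul_diagonal_iterate hX hY⟩

end Blocks

theorem forall_iff_forall_even_and_forall_odd {ι : Type*} (f : ι → ℕ) {P : ι → Prop} :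
    (∀ j, P j) ↔ (∀ j, Even (f j) → P j) ∧ ∀ j, Odd (f j) → P j :=
  ⟨fun h => ⟨fun j _ => h j, fun j _ => h j⟩,
    fun ⟨he, ho⟩ j => (Nat.even_or_odd (f j)).elim (he j) (ho j)⟩

section Complex

variable {m : Type*} [Fintype m] [DecidableEq m]

theorem Matrix.inv_mul_mul_eq_iff {α : Type*} [CommRing α] {P Q A B : Matrix m m α}
    (hP : IsUnit P) : P⁻¹ * A * Q = B ↔ A * Q = P * B := by
  have := hP.invertible
  rw [mul_assoc, inv_mul_eq_iff_eq_mul_of_invertible]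

theorem Matrix.isUnit_map_conj {C : Matrix m m ℂ} (hC : IsUnit C) :
    IsUnit (C.map (starRingEnd ℂ)) :=
  hC.map (starRingEnd ℂ).mapMatrix

theorem consimilarPair_iff {A₁ A₂ B₁ B₂ : Matrix m m ℂ} :
    ConsimilarPair A₁ A₂ B₁ B₂ ↔ ∃ S : Matrix m m ℂ, IsUnit S ∧
      A₁ * S = S.map (starRingEnd ℂ) * B₁ ∧ A₂ * S = S.map (starRingEnd ℂ) * B₂ := by
  refine exists_congr fun S => and_congr_right fun hS => ?_
  rw [inv_mul_mul_eq_iff (isUnit_map_conj hS), inv_mul_mul_eq_iff (isUnit_map_conj hS)]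

theorem comp_mul_eq_map_mul_comp_iff {ι : Type*} [Fintype ι]
    {A B S : Matrix ι ι (Matrix m m ℂ)} :
    comp ι ι m m ℂ A * comp ι ι m m ℂ S =
        (comp ι ι m m ℂ S).map (starRingEnd ℂ) * comp ι ι m m ℂ B ↔
      A * S = S.map (starRingEnd ℂ).mapMatrix * B := by
  rw [← (compRingEquiv ι m ℂ).injective.eq_iff, map_mul, map_mul]
  rfl

theorem consimilarPair_comp_iff {ι : Type*} [Fintype ι] [DecidableEq ι]
    {A₁ A₂ B₁ B₂ : Matrix ι ι (Matrix m m ℂ)} :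
    ConsimilarPair (comp ι ι m m ℂ A₁) (comp ι ι m m ℂ A₂) (comp ι ι m m ℂ B₁)
        (comp ι ι m m ℂ B₂) ↔
      ∃ S : Matrix ι ι (Matrix m m ℂ), IsUnit S ∧ A₁ * S = S.map (starRingEnd ℂ).mapMatrix * B₁ ∧
        A₂ * S = S.map (starRingEnd ℂ).mapMatrix * B₂ := by
  rw [consimilarPair_iff, (comp ι ι m m ℂ).symm.exists_congr_left]
  simp only [Equiv.symm_symm, isUnit_comp_iff, comp_mul_eq_map_mul_comp_iff]

theorem involutive_mapMatrix_conj :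
    Function.Involutive ((starRingEnd ℂ).mapMatrix : Matrix m m ℂ → Matrix m m ℂ) :=
  fun A => by ext; simp

theorem iterate_mapMatrix_conj_apply (k : ℕ) (C : Matrix m m ℂ) :
    ((starRingEnd ℂ).mapMatrix)^[k] C = if Even k then C else C.map (starRingEnd ℂ) := by
  split_ifs with hk
  · exact congr_fun (involutive_mapMatrix_conj.iterate_even hk) C
  · exact congr_fun (involutive_mapMatrix_conj.iterate_odd (Nat.not_even_iff_odd.mp hk)) C

theorem forall_mul_iterate_conj_iff {ι : Type*} (f : ι → ℕ) {C : Matrix m m ℂ} (hC : IsUnit C)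
    (A B : ι → Matrix m m ℂ) :
    (∀ j, A j * (starRingEnd ℂ).mapMatrix^[f j] C = (starRingEnd ℂ).mapMatrix^[f j] C * B j) ↔
      (∀ j, Even (f j) → C⁻¹ * A j * C = B j) ∧
        ∀ j, Odd (f j) → (C.map (starRingEnd ℂ))⁻¹ * A j * C.map (starRingEnd ℂ) = B j := by
  rw [forall_iff_forall_even_and_forall_odd f]
  refine and_congr (forall_congr' fun j => imp_congr_right fun hj => ?_)
    (forall_congr' fun j => imp_congr_right fun hj => ?_)
  · rw [iterate_mapMatrix_conj_apply, if_pos hj, inv_mul_mul_eq_iff hC]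
  · rw [iterate_mapMatrix_conj_apply, if_neg (Nat.not_even_iff_odd.mpr hj),
      inv_mul_mul_eq_iff (isUnit_map_conj hC)]

theorem forall_mul_iterate_conj_eq_iterate_succ_iff {ι : Type*} (f : ι → ℕ) {C : Matrix m m ℂ}
    (hC : IsUnit C) {e : ℕ} (he : Even e) (A B : ι → Matrix m m ℂ) :
    (∀ j, A j * (starRingEnd ℂ).mapMatrix^[f j + e] C =
        (starRingEnd ℂ).mapMatrix^[f j + e + 1] C * B j) ↔
      (∀ j, Odd (f j + 1) → (C.map (starRingEnd ℂ))⁻¹ * A j * C = B j) ∧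
        ∀ j, Even (f j + 1) → C⁻¹ * A j * C.map (starRingEnd ℂ) = B j := by
  rw [Nat.even_iff] at he
  rw [forall_iff_forall_even_and_forall_odd (fun j => f j + 1), and_comm]
  refine and_congr (forall_congr' fun j => imp_congr_right fun hj => ?_)
    (forall_congr' fun j => imp_congr_right fun hj => ?_)
  all_goals
    rw [iterate_mapMatrix_conj_apply, iterate_mapMatrix_conj_apply]
    simp only [Nat.odd_iff, Nat.even_iff] at hj
  · rw [if_pos (Nat.even_iff.mpr (by omega)), if_neg (Nat.not_even_iff.mpr (by omega)),
      inv_mul_mul_eq_iff (isUnit_map_conj hC)]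
  · rw [if_neg (Nat.not_even_iff.mpr (by omega)), if_pos (Nat.even_iff.mpr (by omega)),
      inv_mul_mul_eq_iff hC]

end Complex

theorem comp_Jblocks {n p q : ℕ} :
    comp _ _ (Fin n) (Fin n) ℂ (Jblocks (Matrix (Fin n) (Fin n) ℂ) (rBlocks p q)) = Jmat n p q := by
  ext ⟨i, a⟩ ⟨j, b⟩
  simp only [comp_apply, Jblocks, Jmat, of_apply]
  split_ifs <;> simp_all [one_apply]

theorem comp_Mblocks {n p q : ℕ} (X : Fin p → Matrix (Fin n) (Fin n) ℂ)
    (Y : Fin q → Matrix (Fin n) (Fin n) ℂ) :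
    comp _ _ (Fin n) (Fin n) ℂ (Mblocks X Y) = Mmat n p q X Y := by
  ext ⟨i, a⟩ ⟨j, b⟩
  simp only [comp_apply, Mblocks, Mmat, of_apply]
  split_ifs <;> rfl

theorem even_add_two_sub_mod_two (p : ℕ) : Even (p + 2 - p % 2) := by
  rw [Nat.even_iff]; omega

theorem stmt_11_general {n : ℕ} (p q : ℕ)
    (X X' : Fin p → Matrix (Fin n) (Fin n) ℂ)
    (Y Y' : Fin q → Matrix (Fin n) (Fin n) ℂ) :
    ConsimilarPair (Jmat n p q) (Mmat n p q X Y) (Jmat n p q) (Mmat n p q X' Y') ↔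
      ∃ C : Matrix (Fin n) (Fin n) ℂ, IsUnit C ∧
        (∀ j : Fin p, Even ((j : ℕ) + 1) → C⁻¹ * X j * C = X' j) ∧
        (∀ j : Fin p, Odd ((j : ℕ) + 1) →
          (C.map (starRingEnd ℂ))⁻¹ * X j * (C.map (starRingEnd ℂ)) = X' j) ∧
        (∀ j : Fin q, Odd ((j : ℕ) + 1) →
          (C.map (starRingEnd ℂ))⁻¹ * Y j * C = Y' j) ∧
        (∀ j : Fin q, Even ((j : ℕ) + 1) →
          C⁻¹ * Y j * (C.map (starRingEnd ℂ)) = Y' j) := by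
  rw [← comp_Jblocks, ← comp_Mblocks, ← comp_Mblocks, consimilarPair_comp_iff,
    exists_isUnit_Jblocks_Mblocks_intertwiner_iff]
  refine exists_congr fun C => and_congr_right fun hC => ?_
  rw [forall_mul_iterate_conj_iff _ hC,
    forall_mul_iterate_conj_eq_iterate_succ_iff (fun j : Fin q => (j : ℕ)) hC
      (even_add_two_sub_mod_two p)]
  exact and_assoc

/-- `(J, M_{X,Y})` and `(J, M_{X',Y'})` are consimilar iff there is a
nonsingular `C` such that (with 1-based indices `j`): `C⁻¹·X_j·C = X'_j` for
even `j`; `conj(C)⁻¹·X_j·conj(C) = X'_j` for odd `j`;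
`conj(C)⁻¹·Y_j·C = Y'_j` for odd `j`; `C⁻¹·Y_j·conj(C) = Y'_j` for even `j`. -/
theorem stmt_11 {n : ℕ} (hn : 1 ≤ n) (p q : ℕ)
    (X X' : Fin p → Matrix (Fin n) (Fin n) ℂ)
    (Y Y' : Fin q → Matrix (Fin n) (Fin n) ℂ) :
    ConsimilarPair (Jmat n p q) (Mmat n p q X Y) (Jmat n p q) (Mmat n p q X' Y') ↔
      ∃ C : Matrix (Fin n) (Fin n) ℂ, IsUnit C ∧
        (∀ j : Fin p, Even ((j : ℕ) + 1) → C⁻¹ * X j * C = X' j) ∧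
        (∀ j : Fin p, Odd ((j : ℕ) + 1) →
          (C.map (starRingEnd ℂ))⁻¹ * X j * (C.map (starRingEnd ℂ)) = X' j) ∧
        (∀ j : Fin q, Odd ((j : ℕ) + 1) →
          (C.map (starRingEnd ℂ))⁻¹ * Y j * C = Y' j) ∧
        (∀ j : Fin q, Even ((j : ℕ) + 1) →
          C⁻¹ * Y j * (C.map (starRingEnd ℂ)) = Y' j) :=
  stmt_11_general p q X X' Y Y'
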